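/- Let G be a finite group, n ≥ 1, and (H, Y, β) a generating symbol of SC_n(G) with β = (b_1, …, b_r). If there exists a nonempty subset I ⊆ {1, …, r} with Σ_{i ∈ I} b_i = 0 in the character group H^∨, then the class of (H, Y, β) in the combinatorial Burnside group BC_n(G) is zero. -/

import Mathlib

open scoped Classical

noncomputable section

namespace CBG

/-- The character group `A^∨ = Hom(A, ℂ^×)` of a group `A`, written additively. -/
abbrev Ch (A : Type*) [Group A] : Type _ := Additive (A →* ℂˣ)

/-- A multiset of characters generates the character group. -/
def gens {A : Type*} [Group A] (β : Multiset (Ch A)) : Prop :=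
  AddSubgroup.closure {b | b ∈ β} = ⊤

variable (G : Type*) [Group G]

/-- Generating symbols `(H, Y, β)` of the combinatorial symbols group `SC_n(G)`:
`H ⊆ G` abelian, `H ⊆ Y ⊆ Z_G(H)`, and `β` a multiset (= sequence modulo the
reordering relation (O)) of nontrivial characters of `H`, of length `1 ≤ r ≤ n`,
generating `H^∨`. -/
structure Symbol (n : ℕ) where
  H : Subgroup G
  Y : Subgroup G
  habelian : IsMulCommutative H
  hHY : H ≤ Y
  hYC : Y ≤ Subgroup.centralizer (H : Set G)
  β : Multiset (Ch H)
  hcard₁ : 1 ≤ Multiset.card β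
  hcard₂ : Multiset.card β ≤ n
  hne : ∀ b ∈ β, b ≠ 0
  hgen : gens β

/-- The combinatorial symbols group `SC_n(G)`: the free `ℤ`-module on the symbols. -/
abbrev SC (n : ℕ) : Type _ := Symbol G n →₀ ℤ

/-- The symbol `(H, Y, β)` as an element of `SC_n(G)`, with the convention that
an invalid symbol (in particular, one whose character sequence contains the
trivial character) is `0`. -/
def mkSC (n : ℕ) (H Y : Subgroup G) (β : Multiset (Ch H)) : SC G n :=
  if h : IsMulCommutative H ∧ H ≤ Y ∧ Y ≤ Subgroup.centralizer (H : Set G) ∧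
      1 ≤ Multiset.card β ∧ Multiset.card β ≤ n ∧ (∀ b ∈ β, b ≠ 0) ∧ gens β then
    Finsupp.single ⟨H, Y, h.1, h.2.1, h.2.2.1, β, h.2.2.2.1, h.2.2.2.2.1,
      h.2.2.2.2.2.1, h.2.2.2.2.2.2⟩ 1
  else 0

/-- Restriction of a character to a smaller subgroup. -/
def resCh {H K : Subgroup G} (h : K ≤ H) (b : Ch H) : Ch K :=
  Additive.ofMul ((Additive.toMul b).comp (Subgroup.inclusion h))

/-- The conjugate subgroup `gHg⁻¹`. -/
def conjSub (g : G) (H : Subgroup G) : Subgroup G :=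
  Subgroup.map (MulAut.conj g : G ≃* G) H

/-- Transport of a character of `H` to a character of `K = gHg⁻¹` along conjugation by `g`. -/
def conjChTo {H K : Subgroup G} (g : G) (hK : conjSub G g H = K) (b : Ch H) : Ch K :=
  Additive.ofMul ((Additive.toMul b).comp
    (((MulEquiv.subgroupMap (MulAut.conj g : G ≃* G) H).trans
      (MulEquiv.subgroupCongr hK)).symm.toMonoidHom))

/-- Relation (C): conjugation. -/
def relC (n : ℕ) : Set (SC G n) :=
  {x | ∃ (s : Symbol G n) (g : G),
    x = Finsupp.single s 1 -
        mkSC G n (conjSub G g s.H) (conjSub G g s.Y) (s.β.map (conjChTo G g rfl))}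

/-- Relation (V): vanishing. -/
def relV (n : ℕ) : Set (SC G n) :=
  {x | ∃ s : Symbol G n,
    (s.H = ⊥ ∨ ∃ (b₁ b₂ : Ch s.H) (rest : Multiset (Ch s.H)),
      s.β = b₁ ::ₘ b₂ ::ₘ rest ∧ b₁ + b₂ = 0) ∧
    x = Finsupp.single s 1}

/-- Relation (B2): blowup. -/
def relB2 (n : ℕ) : Set (SC G n) :=
  {x | ∃ (s : Symbol G n) (b₁ b₂ : Ch s.H) (rest : Multiset (Ch s.H)),
    s.β = b₁ ::ₘ b₂ ::ₘ rest ∧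
    ((b₁ = b₂ ∧ x = Finsupp.single s 1 - mkSC G n s.H s.Y (b₂ ::ₘ rest)) ∨
     (b₁ ≠ b₂ ∧ (∃ b ∈ s.β, b ∈ AddSubgroup.zmultiples (b₁ - b₂)) ∧
        x = Finsupp.single s 1 - mkSC G n s.H s.Y ((b₁ - b₂) ::ₘ b₂ ::ₘ rest)
            - mkSC G n s.H s.Y (b₁ ::ₘ (b₂ - b₁) ::ₘ rest)) ∨
     (b₁ ≠ b₂ ∧ ¬(∃ b ∈ s.β, b ∈ AddSubgroup.zmultiples (b₁ - b₂)) ∧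
        x = Finsupp.single s 1 - mkSC G n s.H s.Y ((b₁ - b₂) ::ₘ b₂ ::ₘ rest)
            - mkSC G n s.H s.Y (b₁ ::ₘ (b₂ - b₁) ::ₘ rest)
            - mkSC G n (Subgroup.map s.H.subtype (MonoidHom.ker (Additive.toMul (b₁ - b₂))))
                s.Y (s.β.map (resCh G (Subgroup.map_subtype_le _)))))}

/-- Relation (B2'): modified blowup. -/
def relB2' (n : ℕ) : Set (SC G n) :=
  {x | ∃ (s : Symbol G n) (b₁ b₂ : Ch s.H) (rest : Multiset (Ch s.H)),
    s.β = b₁ ::ₘ b₂ ::ₘ rest ∧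
    ((b₁ = b₂ ∧ x = Finsupp.single s 1 - mkSC G n s.H s.Y (b₂ ::ₘ rest)) ∨
     (b₁ ≠ b₂ ∧
        x = Finsupp.single s 1 - mkSC G n s.H s.Y ((b₁ - b₂) ::ₘ b₂ ::ₘ rest)
            - mkSC G n s.H s.Y (b₁ ::ₘ (b₂ - b₁) ::ₘ rest)))}

/-- The combinatorial Burnside group `BC_n(G)`. -/
abbrev BC (n : ℕ) : Type _ :=
  SC G n ⧸ Submodule.span ℤ (relC G n ∪ relV G n ∪ relB2 G n)

/-- The group `BC'_n(G)`. -/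
abbrev BC' (n : ℕ) : Type _ :=
  SC G n ⧸ Submodule.span ℤ (relC G n ∪ relV G n ∪ relB2' G n)

/-- Projection `SC_n(G) → BC_n(G)`. -/
def BCmk (n : ℕ) : SC G n →ₗ[ℤ] BC G n :=
  Submodule.mkQ _

/-- Projection `SC_n(G) → BC'_n(G)`. -/
def BC'mk (n : ℕ) : SC G n →ₗ[ℤ] BC' G n :=
  Submodule.mkQ _

end CBG

open CBG

/-!
Induction on the size of the zero-sum subsequence `I`. Since all characters are nontrivial,
`I = c₁ + c₂ + J` has at least two entries, and if `c₁ + c₂ = 0` the vanishing relation applies.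
Otherwise blow up the symbol whose characters are `(c₁ + c₂, c₂, rest)`: one of the resulting
terms is the original symbol, and the symbol itself as well as every other term contains the
shorter zero-sum subsequence `(c₁ + c₂) + J` (restricted to a subgroup for the third term), so
all of them vanish by induction.
-/

lemma Multiset.exists_eq_cons_cons_of_sum_eq_zero {M : Type*} [AddCommMonoid M]
    {I : Multiset M} (hI : I ≠ 0) (hsum : I.sum = 0) (hne : ∀ x ∈ I, x ≠ 0) :
    ∃ a b J, I = a ::ₘ b ::ₘ J := by
  obtain ⟨a, ha⟩ := Multiset.exists_mem_of_ne_zero hI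
  obtain ⟨I', rfl⟩ := Multiset.exists_cons_of_mem ha
  obtain ⟨b, hb⟩ := Multiset.exists_mem_of_ne_zero (s := I') fun h =>
    hne a ha (by simpa [h] using hsum)
  obtain ⟨J, rfl⟩ := Multiset.exists_cons_of_mem hb
  exact ⟨a, b, J, rfl⟩

namespace CBG

variable {G : Type*} [Group G]

def IsSymbol (n : ℕ) (H Y : Subgroup G) (β : Multiset (Ch H)) : Prop :=
  IsMulCommutative H ∧ H ≤ Y ∧ Y ≤ Subgroup.centralizer (H : Set G) ∧
    1 ≤ Multiset.card β ∧ Multiset.card β ≤ n ∧ (∀ b ∈ β, b ≠ 0) ∧ gens β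

lemma IsSymbol.ne_zero {n : ℕ} {H Y : Subgroup G} {β : Multiset (Ch H)}
    (h : IsSymbol n H Y β) : ∀ b ∈ β, b ≠ 0 :=
  h.2.2.2.2.2.1

lemma mkSC_of_not_isSymbol {n : ℕ} {H Y : Subgroup G} {β : Multiset (Ch H)}
    (h : ¬IsSymbol n H Y β) : mkSC G n H Y β = 0 :=
  dif_neg h

lemma Symbol.isSymbol {n : ℕ} (s : Symbol G n) : IsSymbol n s.H s.Y s.β :=
  ⟨s.habelian, s.hHY, s.hYC, s.hcard₁, s.hcard₂, s.hne, s.hgen⟩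

def IsSymbol.toSymbol {n : ℕ} {H Y : Subgroup G} {β : Multiset (Ch H)}
    (h : IsSymbol n H Y β) : Symbol G n :=
  ⟨H, Y, h.1, h.2.1, h.2.2.1, β, h.2.2.2.1, h.2.2.2.2.1, h.2.2.2.2.2.1, h.2.2.2.2.2.2⟩

lemma IsSymbol.mkSC_eq {n : ℕ} {H Y : Subgroup G} {β : Multiset (Ch H)}
    (h : IsSymbol n H Y β) : mkSC G n H Y β = Finsupp.single h.toSymbol 1 :=
  dif_pos h

lemma Symbol.mkSC_eq {n : ℕ} (s : Symbol G n) : mkSC G n s.H s.Y s.β = Finsupp.single s 1 :=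
  s.isSymbol.mkSC_eq

lemma gens_add_cons {A : Type*} [Group A] {a b : Ch A} {r : Multiset (Ch A)}
    (h : gens (a ::ₘ b ::ₘ r)) : gens ((a + b) ::ₘ b ::ₘ r) := by
  unfold gens at h ⊢
  set S := AddSubgroup.closure {x | x ∈ (a + b) ::ₘ b ::ₘ r}
  have mem : ∀ x ∈ (a + b) ::ₘ b ::ₘ r, x ∈ S := fun x hx => AddSubgroup.subset_closure hx
  rw [eq_top_iff, ← h, AddSubgroup.closure_le]
  intro x hx
  rcases Multiset.mem_cons.1 hx with rfl | hx
  · have hsub := S.sub_mem (mem (x + b) (by simp)) (mem b (by simp))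
    -- `rw [add_sub_cancel_right]` fails to match through the `Additive` instances on `Ch A`
    rwa [show x + b - b = x from add_sub_cancel_right x b] at hsub
  · exact mem x (Multiset.mem_cons_of_mem hx)

lemma IsSymbol.add_cons {n : ℕ} {H Y : Subgroup G} {a b : Ch H} {r : Multiset (Ch H)}
    (h : IsSymbol n H Y (a ::ₘ b ::ₘ r)) (hab : a + b ≠ 0) :
    IsSymbol n H Y ((a + b) ::ₘ b ::ₘ r) := by
  obtain ⟨hcomm, hHY, hYC, hcard₁, hcard₂, hne, hgen⟩ := h
  refine ⟨hcomm, hHY, hYC, by simp, by simpa using hcard₂, ?_, gens_add_cons hgen⟩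
  intro x hx
  rcases Multiset.mem_cons.1 hx with rfl | hx
  · exact hab
  · exact hne x (Multiset.mem_cons_of_mem hx)

lemma resCh_multiset_sum {H K : Subgroup G} (h : K ≤ H) (I : Multiset (Ch H)) :
    (I.map (resCh G h)).sum = resCh G h I.sum := by
  induction I using Multiset.induction_on with
  | empty => rfl
  | cons a t ih =>
    rw [Multiset.map_cons, Multiset.sum_cons, Multiset.sum_cons, ih]
    rfl

lemma BCmk_eq_zero_of_mem_rel {n : ℕ} {x : SC G n} (hx : x ∈ relC G n ∪ relV G n ∪ relB2 G n) :
    BCmk G n x = 0 :=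
  (Submodule.Quotient.mk_eq_zero _).2 (Submodule.subset_span hx)

section Relations

variable {n : ℕ} {H Y : Subgroup G} {b₁ b₂ : Ch H} {rest : Multiset (Ch H)}

lemma IsSymbol.BCmk_mkSC_eq_zero_of_add_eq_zero (h : IsSymbol n H Y (b₁ ::ₘ b₂ ::ₘ rest))
    (hb : b₁ + b₂ = 0) : BCmk G n (mkSC G n H Y (b₁ ::ₘ b₂ ::ₘ rest)) = 0 := by
  rw [h.mkSC_eq]
  exact BCmk_eq_zero_of_mem_rel (Or.inl (Or.inr ⟨_, Or.inr ⟨b₁, b₂, rest, rfl, hb⟩, rfl⟩))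

lemma IsSymbol.BCmk_mkSC_blowup (h : IsSymbol n H Y (b₁ ::ₘ b₂ ::ₘ rest)) (hb : b₁ ≠ b₂) :
    BCmk G n (mkSC G n H Y (b₁ ::ₘ b₂ ::ₘ rest)) =
      BCmk G n (mkSC G n H Y ((b₁ - b₂) ::ₘ b₂ ::ₘ rest)) +
      BCmk G n (mkSC G n H Y (b₁ ::ₘ (b₂ - b₁) ::ₘ rest)) +
      if ∃ b ∈ b₁ ::ₘ b₂ ::ₘ rest, b ∈ AddSubgroup.zmultiples (b₁ - b₂) then 0 else
        BCmk G n (mkSC G n (Subgroup.map H.subtype (MonoidHom.ker (Additive.toMul (b₁ - b₂))))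
          Y ((b₁ ::ₘ b₂ ::ₘ rest).map (resCh G (Subgroup.map_subtype_le _)))) := by
  rw [h.mkSC_eq]
  split_ifs with hex
  · have := BCmk_eq_zero_of_mem_rel
      (Or.inr ⟨h.toSymbol, b₁, b₂, rest, rfl, Or.inr (Or.inl ⟨hb, hex, rfl⟩)⟩)
    simp only [map_sub, sub_sub, map_add] at this
    rw [add_zero]
    exact sub_eq_zero.1 this
  · have := BCmk_eq_zero_of_mem_rel
      (Or.inr ⟨h.toSymbol, b₁, b₂, rest, rfl, Or.inr (Or.inr ⟨hb, hex, rfl⟩)⟩)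
    simp only [map_sub, sub_sub, map_add] at this
    exact sub_eq_zero.1 this

end Relations

theorem BCmk_mkSC_eq_zero_of_sum_eq_zero {n : ℕ} {H Y : Subgroup G} {β I : Multiset (Ch H)}
    (hIβ : I ≤ β) (hI : I ≠ 0) (hsum : I.sum = 0) : BCmk G n (mkSC G n H Y β) = 0 := by
  induction hk : Multiset.card I using Nat.strong_induction_on generalizing H Y β I with
  | _ k IH =>
  by_cases hβ : IsSymbol n H Y β
  swap
  · rw [mkSC_of_not_isSymbol hβ, map_zero]
  obtain ⟨c₁, c₂, J, rfl⟩ := Multiset.exists_eq_cons_cons_of_sum_eq_zero hI hsum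
    fun x hx => hβ.ne_zero x (Multiset.mem_of_le hIβ hx)
  obtain ⟨t, rfl⟩ := Multiset.le_iff_exists_add.1 hIβ
  set rest := J + t
  have hβ_eq : c₁ ::ₘ c₂ ::ₘ J + t = c₁ ::ₘ c₂ ::ₘ rest := by simp only [Multiset.cons_add, rest]
  rw [hβ_eq] at hβ ⊢
  by_cases h₁₂ : c₁ + c₂ = 0
  · exact hβ.BCmk_mkSC_eq_zero_of_add_eq_zero h₁₂
  have hγ := hβ.add_cons h₁₂
  have hsum' : ((c₁ + c₂) ::ₘ J).sum = 0 := by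
    simp only [Multiset.sum_cons] at hsum ⊢
    exact (add_assoc c₁ c₂ J.sum).trans hsum
  have hlt : Multiset.card ((c₁ + c₂) ::ₘ J) < k := by simp [← hk]
  have hJ : ∀ x, (c₁ + c₂) ::ₘ J ≤ (c₁ + c₂) ::ₘ x ::ₘ rest := fun x =>
    Multiset.cons_le_cons _ ((Multiset.le_add_right J t).trans (Multiset.le_cons_self _ _))
  have vanish : ∀ x, BCmk G n (mkSC G n H Y ((c₁ + c₂) ::ₘ x ::ₘ rest)) = 0 := fun x =>
    IH _ hlt (hJ x) Multiset.cons_ne_zero hsum' rfl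
  have hne : c₁ + c₂ ≠ c₂ := fun h =>
    hβ.ne_zero c₁ (Multiset.mem_cons_self _ _) ((add_eq_right (a := c₁) (b := c₂)).mp h)
  have hblow := hγ.BCmk_mkSC_blowup hne
  rw [vanish, vanish] at hblow
  rw [show c₁ = c₁ + c₂ - c₂ from (add_sub_cancel_right c₁ c₂).symm]
  split_ifs at hblow
  · rw [add_zero, add_zero] at hblow
    exact hblow.symm
  · have hres : BCmk G n (mkSC G n (Subgroup.map H.subtype (Additive.toMul (c₁ + c₂ - c₂)).ker) Y
        (((c₁ + c₂) ::ₘ c₂ ::ₘ rest).map (resCh G (Subgroup.map_subtype_le _)))) = 0 :=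
      IH _ (by simpa using hlt) (Multiset.map_le_map (hJ c₂)) (by simp)
        (by rw [resCh_multiset_sum, hsum']; rfl) rfl
    rw [hres, add_zero, add_zero] at hblow
    exact hblow.symm

end CBG

open CBG

theorem BC_symbol_vanishes_of_subset_sum_zero_general (G : Type*) [Group G]
    (n : ℕ) (s : Symbol G n)
    (h : ∃ I : Multiset (Ch s.H), I ≤ s.β ∧ I ≠ 0 ∧ I.sum = 0) :
    BCmk G n (Finsupp.single s 1) = 0 := by
  obtain ⟨I, hIβ, hI, hsum⟩ := h
  rw [← s.mkSC_eq]
  exact BCmk_mkSC_eq_zero_of_sum_eq_zero hIβ hI hsum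

/-- Let `G` be a finite group, `n ≥ 1`, and `(H, Y, β)` a generating symbol of
`SC_n(G)`.  If some nonempty subsequence `I` of `β` has `∑_{b ∈ I} b = 0` in `H^∨`,
then the class of `(H, Y, β)` in `BC_n(G)` is zero. -/
theorem BC_symbol_vanishes_of_subset_sum_zero (G : Type*) [Group G] [Fintype G]
    (n : ℕ) (hn : 1 ≤ n) (s : Symbol G n)
    (h : ∃ I : Multiset (Ch s.H), I ≤ s.β ∧ I ≠ 0 ∧ I.sum = 0) :
    BCmk G n (Finsupp.single s 1) = 0 :=
  BC_symbol_vanishes_of_subset_sum_zero_general G n s h
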